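/- Let W > 0 be a random variable with Laplace transform φ_W(u) = E[e^{-uW}], and suppose φ_W is invertible on its range. If E is a standard exponential random variable independent of W, then the random variable φ_W(E/W) is uniformly distributed on (0,1). -/

import Mathlib

open MeasureTheory ProbabilityTheory Filter Set Topology Real

/-!
Write `φ u = mgf W (-u)`. It is continuous on `[0, ∞)` by dominated convergence, with `φ 0 = 1`
and `φ u → 0` as `u → ∞`, so every `t ∈ (0, 1)` is `φ s` for some `s ≥ 0`. As `φ` is strictly
decreasing and `E > 0` a.s., `{φ (E / W) ≤ t} = {s W ≤ E}` a.s., and integrating the exponential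
tail `P (x ≤ E) = e^{-x}` against the law of the independent `W` gives
`P (s W ≤ E) = 𝔼[e^{-s W}] = φ s = t`.
-/

namespace ProbabilityTheory

variable {Ω : Type*} {m : MeasurableSpace Ω} {μ : Measure Ω} {X : Ω → ℝ}

section NonnegMGF

variable [IsFiniteMeasure μ]

lemma integrable_exp_mul_of_nonneg_of_nonpos (hX : AEMeasurable X μ) (h0 : 0 ≤ᵐ[μ] X) {t : ℝ}
    (ht : t ≤ 0) : Integrable (fun ω ↦ exp (t * X ω)) μ := by
  refine .of_mem_Icc 0 1 (measurable_exp.comp_aemeasurable (hX.const_mul t)) ?_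
  filter_upwards [h0] with ω hω
  exact ⟨(exp_pos _).le, exp_le_one_iff.mpr (mul_nonpos_of_nonpos_of_nonneg ht hω)⟩

lemma monotoneOn_mgf_Iic (hX : AEMeasurable X μ) (h0 : 0 ≤ᵐ[μ] X) :
    MonotoneOn (mgf X μ) (Iic 0) := fun s hs t ht hst ↦ by
  refine integral_mono_ae (integrable_exp_mul_of_nonneg_of_nonpos hX h0 hs)
    (integrable_exp_mul_of_nonneg_of_nonpos hX h0 ht) ?_
  filter_upwards [h0] with ω hω
  exact exp_le_exp.mpr (mul_le_mul_of_nonneg_right hst hω)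

lemma continuousOn_mgf_Iic (hX : AEMeasurable X μ) (h0 : 0 ≤ᵐ[μ] X) :
    ContinuousOn (mgf X μ) (Iic 0) := by
  refine continuousOn_of_dominated
    (fun t ht ↦ (integrable_exp_mul_of_nonneg_of_nonpos hX h0 ht).aestronglyMeasurable)
    (fun t ht ↦ ?_) (integrable_const 1) (ae_of_all _ fun ω ↦ by fun_prop)
  filter_upwards [h0] with ω hω
  rw [norm_of_nonneg (exp_pos _).le]
  exact exp_le_one_iff.mpr (mul_nonpos_of_nonpos_of_nonneg ht hω)

lemma tendsto_mgf_atBot (hX : AEMeasurable X μ) (hpos : ∀ᵐ ω ∂μ, 0 < X ω) :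
    Tendsto (mgf X μ) atBot (𝓝 0) := by
  have h0 : 0 ≤ᵐ[μ] X := hpos.mono fun _ h ↦ h.le
  have hlim := tendsto_integral_filter_of_dominated_convergence (l := atBot) (μ := μ)
    (F := fun t ω ↦ exp (t * X ω)) (f := 0) (fun _ ↦ 1)
    (eventually_le_atBot 0 |>.mono fun t ht ↦
      (integrable_exp_mul_of_nonneg_of_nonpos hX h0 ht).aestronglyMeasurable)
    (eventually_le_atBot 0 |>.mono fun t ht ↦ by
      filter_upwards [h0] with ω hω
      rw [norm_of_nonneg (exp_pos _).le]
      exact exp_le_one_iff.mpr (mul_nonpos_of_nonpos_of_nonneg ht hω))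
    (integrable_const 1)
    (hpos.mono fun ω hω ↦ tendsto_exp_atBot.comp (tendsto_id.atBot_mul_const hω))
  simp only [Pi.zero_apply, integral_zero] at hlim
  exact hlim

end NonnegMGF

lemma Ioc_subset_image_mgf_Iic [IsProbabilityMeasure μ] (hX : AEMeasurable X μ)
    (hpos : ∀ᵐ ω ∂μ, 0 < X ω) : Ioc 0 1 ⊆ mgf X μ '' Iic 0 := by
  have h := isPreconnected_Iic.intermediate_value_Ioc self_mem_Iic
    (le_principal_iff.mpr (Iic_mem_atBot 0))
    (continuousOn_mgf_Iic hX (hpos.mono fun _ h ↦ h.le)) (tendsto_mgf_atBot hX hpos)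
  rwa [mgf_zero] at h

lemma measure_preimage_singleton_eq_zero_of_continuous [IsProbabilityMeasure μ]
    (hX : Measurable X) {F : ℝ → ℝ} (hF : Continuous F)
    (hXF : ∀ x, μ {ω | X ω ≤ x} = ENNReal.ofReal (F x)) (a : ℝ) : μ (X ⁻¹' {a}) = 0 := by
  have := Measure.isProbabilityMeasure_map (μ := μ) hX.aemeasurable
  have hcdf : ∀ x, cdf (μ.map X) x = max (F x) 0 := fun x ↦ by
    rw [cdf_eq_real, measureReal_def, Measure.map_apply hX measurableSet_Iic]
    exact (congrArg ENNReal.toReal (hXF x)).trans ENNReal.toReal_ofReal'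
  have hcont : ContinuousWithinAt (cdf (μ.map X)) (Iic a) a :=
    (hF.max continuous_const).continuousWithinAt.congr (fun y _ ↦ hcdf y) (hcdf a)
  have hsingle := StieltjesFunction.measure_singleton (cdf (μ.map X)) a
  rw [measure_cdf, Measure.map_apply hX (measurableSet_singleton a)] at hsingle
  rw [hsingle, hcont.leftLim_eq, sub_self, ENNReal.ofReal_zero]

lemma measure_ge_eq_exp_neg_of_cdf [IsProbabilityMeasure μ] (hX : Measurable X)
    (hcdf : ∀ x, μ {ω | X ω ≤ x} = ENNReal.ofReal (1 - exp (-x))) {a : ℝ} (ha : 0 ≤ a) :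
    μ {ω | a ≤ X ω} = ENNReal.ofReal (exp (-a)) := by
  have hatom := measure_preimage_singleton_eq_zero_of_continuous hX (by fun_prop) hcdf a
  have hsplit : {ω | a ≤ X ω} = {ω | X ω ≤ a}ᶜ ∪ X ⁻¹' {a} := by
    ext ω
    simp only [mem_ofPred_eq, mem_union, mem_compl_iff, mem_preimage, mem_singleton_iff, not_le]
    exact ⟨fun h ↦ h.lt_or_eq.imp_right Eq.symm, fun h ↦ h.elim le_of_lt ge_of_eq⟩
  have hexp : exp (-a) ≤ 1 := exp_le_one_iff.mpr (neg_nonpos.mpr ha)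
  rw [hsplit, measure_congr (union_ae_eq_left_of_ae_eq_empty (ae_eq_empty.mpr hatom)),
    prob_compl_eq_one_sub (measurableSet_le hX measurable_const), hcdf, ← ENNReal.ofReal_one,
    ← ENNReal.ofReal_sub _ (by linarith), sub_sub_cancel]

lemma IndepFun.measure_mem_eq_lintegral {α β : Type*} {mα : MeasurableSpace α}
    {mβ : MeasurableSpace β} [IsFiniteMeasure μ] {Y : Ω → α} {Z : Ω → β} (h : IndepFun Y Z μ)
    (hY : Measurable Y) (hZ : Measurable Z) {S : Set (α × β)} (hS : MeasurableSet S) :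
    μ {ω | (Y ω, Z ω) ∈ S} = ∫⁻ y, μ {ω | (y, Z ω) ∈ S} ∂(μ.map Y) := by
  change μ ((fun ω ↦ (Y ω, Z ω)) ⁻¹' S) = _
  rw [← Measure.map_apply (hY.prodMk hZ) hS,
    (indepFun_iff_map_prod_eq_prod_map_map hY.aemeasurable hZ.aemeasurable).mp h,
    Measure.prod_apply hS]
  exact lintegral_congr fun y ↦ Measure.map_apply hZ (measurable_prodMk_left hS)

lemma measure_mul_le_eq_mgf_of_indepFun [IsProbabilityMeasure μ] {E : Ω → ℝ}
    (hXm : Measurable X) (hEm : Measurable E) (h0 : 0 ≤ᵐ[μ] X)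
    (hcdf : ∀ x, μ {ω | E ω ≤ x} = ENNReal.ofReal (1 - exp (-x))) (hind : IndepFun X E μ)
    {s : ℝ} (hs : 0 ≤ s) :
    μ {ω | s * X ω ≤ E ω} = ENNReal.ofReal (mgf X μ (-s)) := by
  have h0' : ∀ᵐ x ∂(μ.map X), 0 ≤ x := (ae_map_iff hXm.aemeasurable measurableSet_Ici).mpr h0
  calc μ {ω | s * X ω ≤ E ω}
      = ∫⁻ x, μ {ω | s * x ≤ E ω} ∂(μ.map X) :=
        hind.measure_mem_eq_lintegral hXm hEm (S := {p | s * p.1 ≤ p.2})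
          (measurableSet_le (by fun_prop) (by fun_prop))
    _ = ∫⁻ x, ENNReal.ofReal (exp (-s * x)) ∂(μ.map X) := by
        refine lintegral_congr_ae (h0'.mono fun x hx ↦ ?_)
        dsimp only
        rw [measure_ge_eq_exp_neg_of_cdf hEm hcdf (mul_nonneg hs hx), neg_mul]
    _ = ∫⁻ ω, ENNReal.ofReal (exp (-s * X ω)) ∂μ := lintegral_map (by fun_prop) hXm
    _ = ENNReal.ofReal (mgf X μ (-s)) :=
        (ofReal_integral_eq_lintegral_ofReal
          (integrable_exp_mul_of_nonneg_of_nonpos hXm.aemeasurable h0 (neg_nonpos.mpr hs))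
          (ae_of_all _ fun _ ↦ (exp_pos _).le)).symm

end ProbabilityTheory

theorem stmt_11 {Ω : Type*} [MeasurableSpace Ω] (P : Measure Ω) [IsProbabilityMeasure P]
    (W E : Ω → ℝ) (hWm : Measurable W) (hEm : Measurable E)
    (hWpos : ∀ ω, 0 < W ω)
    (hEcdf : ∀ t : ℝ, P {ω | E ω ≤ t} = ENNReal.ofReal (1 - Real.exp (-t)))
    (hind : IndepFun E W P)
    (φ : ℝ → ℝ) (hφ : ∀ u, φ u = ∫ ω, Real.exp (-u * W ω) ∂P)
    (hinj : Set.InjOn φ (Set.Ici 0)) :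
    (P {ω | φ (E ω / W ω) ∈ Set.Ioo (0:ℝ) 1} = 1) ∧
      ∀ t ∈ Set.Ioo (0:ℝ) 1, P {ω | φ (E ω / W ω) ≤ t} = ENNReal.ofReal t := by
  have hφ_mgf : ∀ u, φ u = mgf W P (-u) := hφ
  have hW0 : 0 ≤ᵐ[P] W := ae_of_all _ fun ω ↦ (hWpos ω).le
  have hanti : StrictAntiOn φ (Ici 0) := by
    refine AntitoneOn.strictAntiOn_of_injOn (fun u hu v hv huv ↦ ?_) hinj
    simp only [hφ_mgf]
    exact monotoneOn_mgf_Iic hWm.aemeasurable hW0 (mem_Iic.mpr (neg_nonpos.mpr hv))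
      (mem_Iic.mpr (neg_nonpos.mpr hu)) (neg_le_neg huv)
  have hEpos : ∀ᵐ ω ∂P, 0 < E ω := by
    rw [ae_iff]
    simpa using hEcdf 0
  refine ⟨?_, fun t ht ↦ ?_⟩
  · refine (measure_congr (ae_eq_univ.mpr ?_)).trans measure_univ
    rw [compl_ofPred, ← ae_iff]
    filter_upwards [hEpos] with ω hω
    have hu : 0 < E ω / W ω := div_pos hω (hWpos ω)
    refine ⟨?_, ?_⟩
    · rw [hφ_mgf]
      exact mgf_pos (integrable_exp_mul_of_nonneg_of_nonpos hWm.aemeasurable hW0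
        (neg_nonpos.mpr hu.le))
    · simpa [hφ_mgf 0, mgf_zero (μ := P)] using hanti self_mem_Ici hu.le hu
  · obtain ⟨v, hv, hvt⟩ := Ioc_subset_image_mgf_Iic (μ := P) hWm.aemeasurable (ae_of_all _ hWpos)
      (Ioo_subset_Ioc_self ht)
    have hs : 0 ≤ -v := neg_nonneg.mpr hv
    have hφs : φ (-v) = t := by rw [hφ_mgf, neg_neg, hvt]
    have hae : {ω | φ (E ω / W ω) ≤ t} =ᵐ[P] {ω | -v * W ω ≤ E ω} := by
      filter_upwards [hEpos] with ω hω
      rw [← hφs, eq_iff_iff]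
      change φ (E ω / W ω) ≤ φ (-v) ↔ -v * W ω ≤ E ω
      rw [hanti.le_iff_ge (div_nonneg hω.le (hWpos ω).le) hs, le_div_iff₀ (hWpos ω)]
    rw [measure_congr hae, measure_mul_le_eq_mgf_of_indepFun hWm hEm hW0 hEcdf hind.symm hs,
      ← hφ_mgf, hφs]
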